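/- arXiv:1602.08181 — 2 statements merged into one kernel-verified Lean document; each statement's English description precedes it below -/
import Mathlib

section
/- Under the hypotheses of the main theorem (joint density f(x,y) = K ∏ᵢ hᵢ((xᵀ,yᵀ)Fᵢ(x,y)) with Fᵢ of block form [[Aᵢ,Bᵢ],[-Bᵢ,Aᵢ]], Aᵢ symmetric, Bᵢ antisymmetric), each individual ratio Zⱼ = Xⱼ/Yⱼ has the standard Cauchy distribution. -/
open MeasureTheory ProbabilityTheory Real Matrix
open scoped ENNReal

/-- The standard Cauchy distribution, with density `1 / (π (1 + z²))` on `ℝ`. -/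
noncomputable def cauchyMeasure : Measure ℝ :=
  volume.withDensity (fun z => ENNReal.ofReal (1 / (π * (1 + z ^ 2))))

/-- The quadratic form `(xᵀ, yᵀ) F (x, y)` for the block matrix `F = [[A, B], [-B, A]]`. -/
noncomputable def blockQuadForm {m : ℕ} (A B : Matrix (Fin m) (Fin m) ℝ)
    (p : (Fin m → ℝ) × (Fin m → ℝ)) : ℝ :=
  Sum.elim p.1 p.2 ⬝ᵥ (Matrix.fromBlocks A B (-B) A).mulVec (Sum.elim p.1 p.2)

/-!
A simultaneous rotation `(x, y) ↦ (cos θ • x - sin θ • y, sin θ • x + cos θ • y)` of `ℝᵐ × ℝᵐ`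
preserves Lebesgue measure, and since `Aᵢ` is symmetric and `Bᵢ` antisymmetric each form
`blockQuadForm Aᵢ Bᵢ (x, y) = xᵀAᵢx + yᵀAᵢy + 2 xᵀBᵢy` is invariant under it. Hence the law of
`(X, Y)`, and with it the law of every pair `(Xⱼ, Yⱼ)` in the plane, is rotation invariant.
The angle of the line through `(Xⱼ, Yⱼ)`, an element of `ℝ / πℤ`, then has a translation-invariant
law, which must be the normalised Haar measure; and `tan` maps the uniform law on
`(-π/2, π/2)` to the density `1 / (π (1 + z²))`.
-/

lemma MeasureTheory.MeasurePreserving.map_withDensity_eq {α : Type*} [MeasurableSpace α]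
    {ν : Measure α} {T : α → α} (hT : MeasurePreserving T ν ν) {f : α → ℝ≥0∞}
    (hf : Measurable f) (hfT : ∀ x, f (T x) = f x) : (ν.withDensity f).map T = ν.withDensity f := by
  ext s hs
  rw [Measure.map_apply hT.measurable hs, withDensity_apply _ (hT.measurable hs),
    withDensity_apply _ hs, ← hT.setLIntegral_comp_preimage hs hf]
  simp only [hfT]

section PlaneRotation

variable {E F : Type*} [AddCommGroup E] [Module ℝ E] [AddCommGroup F] [Module ℝ F]

noncomputable def planeRotation (θ : ℝ) (p : E × E) : E × E :=
  (cos θ • p.1 - sin θ • p.2, sin θ • p.1 + cos θ • p.2)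

lemma planeRotation_prodMap (L : E →ₗ[ℝ] F) (θ : ℝ) (p : E × E) :
    planeRotation θ (Prod.map L L p) = Prod.map L L (planeRotation θ p) := by
  simp [planeRotation]

def IsRotationInvariant [MeasurableSpace E] (ν : Measure (E × E)) : Prop :=
  ∀ θ : ℝ, ν.map (planeRotation θ) = ν

section Measurable

variable [MeasurableSpace E] [MeasurableAdd₂ E] [MeasurableConstSMul ℝ E]

lemma measurable_planeRotation [MeasurableSub₂ E] (θ : ℝ) :
    Measurable (planeRotation (E := E) θ) := by
  unfold planeRotation; fun_prop

lemma IsRotationInvariant.map_prodMap [MeasurableSub₂ E] [MeasurableSpace F] [MeasurableAdd₂ F]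
    [MeasurableSub₂ F] [MeasurableConstSMul ℝ F] {ν : Measure (E × E)}
    (hν : IsRotationInvariant ν) {L : E →ₗ[ℝ] F} (hL : Measurable L) :
    IsRotationInvariant (ν.map (Prod.map L L)) := fun θ => by
  have hLL : Measurable (Prod.map L L) := hL.prodMap hL
  rw [Measure.map_map (measurable_planeRotation θ) hLL,
    show planeRotation θ ∘ Prod.map L L = Prod.map L L ∘ planeRotation θ from
      funext (planeRotation_prodMap L θ),
    ← Measure.map_map hLL (measurable_planeRotation θ), hν θ]

variable (μ : Measure E) [SFinite μ] [μ.IsAddRightInvariant]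

lemma measurePreserving_shear_snd (t : ℝ) :
    MeasurePreserving (fun p : E × E => (p.1, p.2 + t • p.1)) (μ.prod μ) (μ.prod μ) :=
  (MeasurePreserving.id μ).skew_product (by fun_prop)
    (Filter.Eventually.of_forall fun x => map_add_right_eq_self μ (t • x))

lemma measurePreserving_shear_fst (t : ℝ) :
    MeasurePreserving (fun p : E × E => (p.1 + t • p.2, p.2)) (μ.prod μ) (μ.prod μ) :=
  Measure.measurePreserving_swap.comp
    ((measurePreserving_shear_snd μ t).comp Measure.measurePreserving_swap)

/-- When `sin θ ≠ 0` the rotation is a product of three shears, with parameters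
`-tan (θ / 2) = (cos θ - 1) / sin θ`, `sin θ` and `-tan (θ / 2)`. -/
lemma measurePreserving_planeRotation [MeasurableNeg E] [μ.IsNegInvariant] (θ : ℝ) :
    MeasurePreserving (planeRotation θ) (μ.prod μ) (μ.prod μ) := by
  have hcs := cos_sq_add_sin_sq θ
  rcases eq_or_ne (sin θ) 0 with hs | hs
  · rcases sq_eq_one_iff.1 (by simpa [hs] using hcs : cos θ ^ 2 = 1) with hc | hc
    · convert MeasurePreserving.id (μ.prod μ)
      ext p <;> simp [planeRotation, hc, hs]
    · convert (Measure.measurePreserving_neg μ).prod (Measure.measurePreserving_neg μ)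
      ext p <;> simp [planeRotation, hc, hs]
  obtain ⟨t, ht, ht'⟩ : ∃ t : ℝ, 1 + sin θ * t = cos θ ∧ 2 * t + sin θ * t ^ 2 = -sin θ :=
    ⟨(cos θ - 1) / sin θ, by field_simp; ring, by field_simp; linear_combination hcs⟩
  convert (measurePreserving_shear_fst μ t).comp
    ((measurePreserving_shear_snd μ (sin θ)).comp (measurePreserving_shear_fst μ t)) using 1
  ext p
  · simp only [planeRotation, Function.comp_apply]
    match_scalars
    · linear_combination -ht
    · linear_combination -ht'
  · simp only [planeRotation, Function.comp_apply]
    match_scalars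
    · ring
    · linear_combination -ht

lemma isRotationInvariant_withDensity [MeasurableNeg E] [μ.IsNegInvariant] {f : E × E → ℝ≥0∞}
    (hf : Measurable f) (hrot : ∀ θ p, f (planeRotation θ p) = f p) :
    IsRotationInvariant ((μ.prod μ).withDensity f) := fun θ =>
  (measurePreserving_planeRotation μ θ).map_withDensity_eq hf (hrot θ)

end Measurable

end PlaneRotation

section BlockQuadForm

variable {m : ℕ} {A B : Matrix (Fin m) (Fin m) ℝ}

@[fun_prop]
lemma continuous_blockQuadForm (A B : Matrix (Fin m) (Fin m) ℝ) :
    Continuous (blockQuadForm A B) := by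
  have h : Continuous fun p : (Fin m → ℝ) × (Fin m → ℝ) => Sum.elim p.1 p.2 :=
    continuous_pi fun
      | .inl k => (continuous_apply k).comp continuous_fst
      | .inr k => (continuous_apply k).comp continuous_snd
  exact h.dotProduct (continuous_const.matrix_mulVec h)

lemma blockQuadForm_eq (hB : Bᵀ = -B) (x y : Fin m → ℝ) :
    blockQuadForm A B (x, y) = x ⬝ᵥ A *ᵥ x + y ⬝ᵥ A *ᵥ y + 2 * (x ⬝ᵥ B *ᵥ y) := by
  have hByx : y ⬝ᵥ B *ᵥ x = -(x ⬝ᵥ B *ᵥ y) := by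
    rw [← dotProduct_transpose_mulVec, hB, neg_mulVec, dotProduct_neg]
  simp only [blockQuadForm, fromBlocks_mulVec, sumElim_dotProduct_sumElim, Sum.elim_comp_inl,
    Sum.elim_comp_inr, dotProduct_add, neg_mulVec, dotProduct_neg, hByx]
  ring

lemma blockQuadForm_planeRotation (hA : A.IsSymm) (hB : Bᵀ = -B) (θ : ℝ)
    (p : (Fin m → ℝ) × (Fin m → ℝ)) :
    blockQuadForm A B (planeRotation θ p) = blockQuadForm A B p := by
  obtain ⟨x, y⟩ := p
  have hAyx : y ⬝ᵥ A *ᵥ x = x ⬝ᵥ A *ᵥ y := by rw [← dotProduct_transpose_mulVec, hA.eq]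
  have hByx : y ⬝ᵥ B *ᵥ x = -(x ⬝ᵥ B *ᵥ y) := by
    rw [← dotProduct_transpose_mulVec, hB, neg_mulVec, dotProduct_neg]
  have hBvv (v : Fin m → ℝ) : v ⬝ᵥ B *ᵥ v = 0 := by
    have := dotProduct_transpose_mulVec B v v
    rw [hB, neg_mulVec, dotProduct_neg] at this
    linarith
  rw [planeRotation, blockQuadForm_eq hB, blockQuadForm_eq hB]
  simp only [mulVec_add, mulVec_sub, mulVec_smul, dotProduct_add, add_dotProduct, sub_dotProduct,
    dotProduct_sub, smul_dotProduct, dotProduct_smul, smul_eq_mul, hAyx, hByx, hBvv]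
  linear_combination (x ⬝ᵥ A *ᵥ x + y ⬝ᵥ A *ᵥ y + 2 * (x ⬝ᵥ B *ᵥ y)) * cos_sq_add_sin_sq θ

end BlockQuadForm

lemma LinearMap.ae_apply_ne_zero {E : Type*} [NormedAddCommGroup E] [NormedSpace ℝ E]
    [MeasurableSpace E] [BorelSpace E] [FiniteDimensional ℝ E] (μ : Measure E)
    [μ.IsAddHaarMeasure] {L : E →ₗ[ℝ] ℝ} (hL : L ≠ 0) : ∀ᵐ x ∂μ, L x ≠ 0 :=
  measure_eq_zero_iff_ae_notMem.1 <| Measure.addHaar_submodule μ (LinearMap.ker L) <| by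
    rwa [Ne, LinearMap.ker_eq_top]

section TangentOnCircle

lemma Real.measurable_tan : Measurable tan := by
  rw [show tan = sin / cos from funext tan_eq_sin_div_cos]
  exact measurable_sin.div measurable_cos

lemma map_tan_volume_restrict_Ioo :
    (volume.restrict (Set.Ioo (-(π / 2)) (π / 2))).map tan =
      volume.withDensity fun z => ENNReal.ofReal (1 / (1 + z ^ 2)) := by
  ext S hS
  have hderiv (x : ℝ) (_ : x ∈ Set.univ) :
      HasDerivWithinAt arctan (1 / (1 + x ^ 2)) .univ x :=
    (hasDerivAt_arctan x).hasDerivWithinAt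
  rw [Measure.map_apply Real.measurable_tan hS, withDensity_apply _ hS,
    ← lintegral_indicator_one (Real.measurable_tan hS), ← range_arctan, ← Set.image_univ,
    lintegral_image_eq_lintegral_abs_deriv_mul MeasurableSet.univ hderiv arctan_injective.injOn,
    Measure.restrict_univ, ← lintegral_indicator hS]
  refine lintegral_congr fun x => ?_
  by_cases hx : x ∈ S <;>
    simp [hx, tan_arctan, abs_of_pos (by positivity : (0 : ℝ) < 1 + x ^ 2)]

instance fact_zero_lt_pi : Fact (0 < π) := ⟨pi_pos⟩

noncomputable def circleTan : AddCircle π → ℝ := tan_periodic.lift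

lemma measurable_circleTan : Measurable circleTan :=
  measurable_from_quotient.2 Real.measurable_tan

lemma map_circleTan_volume : (volume : Measure (AddCircle π)).map circleTan =
    volume.withDensity fun z => ENNReal.ofReal (1 / (1 + z ^ 2)) := by
  rw [← (AddCircle.measurePreserving_mk π (-(π / 2))).map_eq,
    Measure.map_map measurable_circleTan AddCircle.measurable_mk',
    show -(π / 2) + π = π / 2 by ring, ← Measure.restrict_congr_set Ioo_ae_eq_Ioc]
  exact map_tan_volume_restrict_Ioo

lemma map_circleTan_haarAddCircle :
    (AddCircle.haarAddCircle : Measure (AddCircle π)).map circleTan = _root_.cauchyMeasure := by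
  have hhaar : (AddCircle.haarAddCircle : Measure (AddCircle π)) =
      (ENNReal.ofReal π)⁻¹ • volume := by
    rw [AddCircle.volume_eq_smul_haarAddCircle, smul_smul,
      ENNReal.inv_mul_cancel (by simp [pi_pos]) (by simp), one_smul]
  rw [hhaar, Measure.map_smul, map_circleTan_volume, ← withDensity_smul _ (by fun_prop),
    _root_.cauchyMeasure]
  congr 1
  funext z
  rw [Pi.smul_apply, smul_eq_mul, ← ENNReal.ofReal_inv_of_pos pi_pos,
    ← ENNReal.ofReal_mul (by positivity)]
  congr 1
  field_simp

lemma AddCircle.eq_haarAddCircle {T : ℝ} [Fact (0 < T)] (κ : Measure (AddCircle T))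
    [IsProbabilityMeasure κ] [κ.IsAddLeftInvariant] : κ = AddCircle.haarAddCircle := by
  have h := Measure.isAddInvariant_eq_smul_of_compactSpace κ AddCircle.haarAddCircle
  have hc : κ.addHaarScalarFactor AddCircle.haarAddCircle = 1 := by
    simpa using (congrArg (· Set.univ) h).symm
  rwa [hc, one_smul] at h

end TangentOnCircle

section LineAngle

noncomputable def lineAngle (q : ℝ × ℝ) : AddCircle π := (Complex.arg ⟨q.2, q.1⟩ : ℝ)

lemma measurable_lineAngle : Measurable lineAngle :=
  AddCircle.measurable_mk'.comp <| Complex.measurable_arg.comp <|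
    Complex.measurableEquivRealProd.symm.measurable.comp measurable_swap

lemma circleTan_lineAngle (q : ℝ × ℝ) : circleTan (lineAngle q) = q.1 / q.2 :=
  Complex.tan_arg _

lemma coe_addCircle_pi_eq_of_coe_angle_eq {x y : ℝ} (h : (x : Real.Angle) = y) :
    (x : AddCircle π) = y := by
  obtain ⟨k, hk⟩ := Real.Angle.angle_eq_iff_two_pi_dvd_sub.1 h
  rw [← sub_eq_zero, ← AddCircle.coe_sub, AddCircle.coe_eq_zero_iff]
  exact ⟨2 * k, by rw [hk]; ring⟩

lemma lineAngle_planeRotation {q : ℝ × ℝ} (hq : q ≠ 0) (θ : ℝ) :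
    lineAngle (planeRotation θ q) = lineAngle q - θ := by
  have hw : (⟨q.2, q.1⟩ : ℂ) ≠ 0 := fun h =>
    hq (Prod.ext (congrArg Complex.im h) (congrArg Complex.re h))
  have hu : (cos (-θ) + sin (-θ) * Complex.I : ℂ) ≠ 0 := by
    rw [Complex.ofReal_cos, Complex.ofReal_sin, ← Complex.exp_mul_I]
    exact Complex.exp_ne_zero _
  have hrot : (⟨(planeRotation θ q).2, (planeRotation θ q).1⟩ : ℂ) =
      (cos (-θ) + sin (-θ) * Complex.I) * ⟨q.2, q.1⟩ := by
    apply Complex.ext <;>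
      simp [planeRotation, Complex.cos_ofReal_re, Complex.sin_ofReal_re] <;> ring
  have harg := Complex.arg_cos_add_sin_mul_I_coe_angle (-θ : ℝ)
  rw [Real.Angle.cos_coe, Real.Angle.sin_coe] at harg
  rw [lineAngle, lineAngle, hrot, ← AddCircle.coe_sub]
  apply coe_addCircle_pi_eq_of_coe_angle_eq
  rw [Complex.arg_mul_coe_angle hu hw, harg, Real.Angle.coe_sub, Real.Angle.coe_neg]
  abel

lemma IsRotationInvariant.isAddLeftInvariant_map_lineAngle {ν : Measure (ℝ × ℝ)}
    (hν : IsRotationInvariant ν) (hline : ∀ᵐ q ∂ν, q.2 ≠ 0) :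
    (ν.map lineAngle).IsAddLeftInvariant := by
  refine ⟨fun g => ?_⟩
  induction g using QuotientAddGroup.induction_on with | H θ => ?_
  have hae : (fun q => (θ : AddCircle π) + lineAngle q) =ᵐ[ν]
      lineAngle ∘ planeRotation (-θ) := by
    filter_upwards [hline] with q hq
    have hq0 : q ≠ 0 := fun h => hq (by simp [h])
    simp [lineAngle_planeRotation hq0, add_comm]
  rw [Measure.map_map (measurable_const_add _) measurable_lineAngle, Function.comp_def,
    Measure.map_congr hae, ← Measure.map_map measurable_lineAngle (measurable_planeRotation _),
    hν]

theorem IsRotationInvariant.map_div_eq_cauchyMeasure {ν : Measure (ℝ × ℝ)}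
    [IsProbabilityMeasure ν] (hν : IsRotationInvariant ν) (hline : ∀ᵐ q ∂ν, q.2 ≠ 0) :
    ν.map (fun q => q.1 / q.2) = _root_.cauchyMeasure := by
  have := Measure.isProbabilityMeasure_map (μ := ν) measurable_lineAngle.aemeasurable
  have := hν.isAddLeftInvariant_map_lineAngle hline
  calc ν.map (fun q => q.1 / q.2) = (ν.map lineAngle).map circleTan := by
        rw [Measure.map_map measurable_circleTan measurable_lineAngle]
        exact congrArg ν.map (funext fun q => (circleTan_lineAngle q).symm)
    _ = AddCircle.haarAddCircle.map circleTan := by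
        rw [AddCircle.eq_haarAddCircle (ν.map lineAngle)]
    _ = _root_.cauchyMeasure := map_circleTan_haarAddCircle

end LineAngle

theorem main_each_ratio_cauchy_general {Ω : Type*} [MeasurableSpace Ω] (μ : Measure Ω)
    [IsProbabilityMeasure μ] (m : ℕ)
    (n : ℕ) (A B : Fin n → Matrix (Fin m) (Fin m) ℝ)
    (hA : ∀ i, (A i).IsSymm) (hB : ∀ i, (B i)ᵀ = -(B i))
    (h : Fin n → ℝ → ℝ) (hmeas : ∀ i, Measurable (h i))
    (K : ℝ)
    (X Y : Ω → Fin m → ℝ) (hX : Measurable X) (hY : Measurable Y)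
    (hlaw : μ.map (fun ω => (X ω, Y ω)) =
      (volume : Measure ((Fin m → ℝ) × (Fin m → ℝ))).withDensity
        (fun p => ENNReal.ofReal (K * ∏ i, h i (blockQuadForm (A i) (B i) p)))) :
    ∀ j : Fin m, μ.map (fun ω => X ω j / Y ω j) = _root_.cauchyMeasure := by
  intro j
  let pj : (Fin m → ℝ) →ₗ[ℝ] ℝ := LinearMap.proj j
  set law := μ.map fun ω => (X ω, Y ω)
  have hXY : Measurable fun ω => (X ω, Y ω) := hX.prodMk hY
  have hpj : Measurable (Prod.map pj pj) := (measurable_pi_apply j).prodMap (measurable_pi_apply j)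
  have := Measure.isProbabilityMeasure_map (μ := μ) hXY.aemeasurable
  have := Measure.isProbabilityMeasure_map (μ := law) hpj.aemeasurable
  have hinv : IsRotationInvariant law := by
    rw [hlaw]
    refine isRotationInvariant_withDensity volume (by fun_prop) fun θ p => ?_
    simp only [blockQuadForm_planeRotation (hA _) (hB _)]
  have hline : ∀ᵐ p ∂law, p.2 j ≠ 0 := by
    refine hlaw ▸ (withDensity_absolutelyContinuous _ _).ae_le
      (Measure.quasiMeasurePreserving_snd.ae (LinearMap.ae_apply_ne_zero volume (L := pj) ?_))
    intro hL
    simpa [pj] using LinearMap.congr_fun hL (Pi.single j 1)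
  calc μ.map (fun ω => X ω j / Y ω j) = (law.map (Prod.map pj pj)).map fun q => q.1 / q.2 := by
        rw [Measure.map_map hpj hXY, Measure.map_map (by fun_prop) (hpj.comp hXY)]
        rfl
    _ = _root_.cauchyMeasure := (hinv.map_prodMap (L := pj) (measurable_pi_apply j)).map_div_eq_cauchyMeasure <|
        (ae_map_iff hpj.aemeasurable
          (measurableSet_eq_fun measurable_snd measurable_const).compl).2 hline

theorem main_each_ratio_cauchy {Ω : Type*} [MeasurableSpace Ω] (μ : Measure Ω)
    [IsProbabilityMeasure μ] (m : ℕ) (hm : 1 < m)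
    (n : ℕ) (A B : Fin n → Matrix (Fin m) (Fin m) ℝ)
    (hA : ∀ i, (A i).IsSymm) (hB : ∀ i, (B i)ᵀ = -(B i))
    (h : Fin n → ℝ → ℝ) (hmeas : ∀ i, Measurable (h i)) (hpos : ∀ i t, 0 ≤ h i t)
    (K : ℝ) (hK : 0 < K)
    (X Y : Ω → Fin m → ℝ) (hX : Measurable X) (hY : Measurable Y)
    (hlaw : μ.map (fun ω => (X ω, Y ω)) =
      (volume : Measure ((Fin m → ℝ) × (Fin m → ℝ))).withDensity
        (fun p => ENNReal.ofReal (K * ∏ i, h i (blockQuadForm (A i) (B i) p)))) :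
    ∀ j : Fin m, μ.map (fun ω => X ω j / Y ω j) = _root_.cauchyMeasure :=
  main_each_ratio_cauchy_general μ m n A B hA hB h hmeas K X Y hX hY hlaw
end

section
/- For every integer n ≥ 0, the function f^{(n)}(z₁,z₂) = (2^{2n}/C(2n,n)) · (1/π²) · (1+z₁z₂)^{2n} / ((1+z₁²)^{n+1}(1+z₂²)^{n+1}) is a probability density on ℝ², and both of its marginals are the standard Cauchy distribution. -/
open MeasureTheory ProbabilityTheory Real

/-- The standard Cauchy distribution, with density `1 / (π (1 + z²))` on `ℝ`. -/
noncomputable def stdCauchyMeasure : Measure ℝ :=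
  volume.withDensity (fun z => ENNReal.ofReal (1 / (π * (1 + z ^ 2))))

/-- The `n`-th component `f⁽ⁿ⁾` in the mixture representation of the Cauchy copula. -/
noncomputable def cauchyCopulaComponent (n : ℕ) (z₁ z₂ : ℝ) : ℝ :=
  (2 ^ (2 * n) / (Nat.choose (2 * n) n : ℝ)) * (1 / π ^ 2) *
    (1 + z₁ * z₂) ^ (2 * n) / ((1 + z₁ ^ 2) ^ (n + 1) * (1 + z₂ ^ 2) ^ (n + 1))


/-! After the substitution `z₁ = tan θ`, the integral of `(1 + z₁ z₂) ^ (2n) / (1 + z₁²) ^ (n+1)`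
over `z₁` becomes `∫_{-π/2}^{π/2} (cos θ + z₂ sin θ) ^ (2n) dθ`. Since
`cos θ + z₂ sin θ = √(1 + z₂²) cos (θ - arctan z₂)` and `cos ^ (2n)` is `π`-periodic, this is
`(1 + z₂²) ^ n` times the Wallis integral `π C(2n,n) / 4 ^ n`, so integrating out `z₁` leaves the
Cauchy density in `z₂`. The density is symmetric, so the same holds for the other marginal, and the
total mass is that of a marginal. -/

open Finset Set intervalIntegral

section Marginals

variable {α β : Type*} [MeasurableSpace α] [MeasurableSpace β] {μ : Measure α} {ν : Measure β}
  {f : α × β → ENNReal}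

theorem map_fst_withDensity_prod [SFinite μ] [SFinite ν] (hf : Measurable f) :
    ((μ.prod ν).withDensity f).map Prod.fst = μ.withDensity fun x => ∫⁻ y, f (x, y) ∂ν := by
  ext s hs
  rw [Measure.map_apply measurable_fst hs, withDensity_apply _ (measurable_fst hs),
    withDensity_apply _ hs, ← prod_univ, ← Measure.prod_restrict, Measure.restrict_univ,
    lintegral_prod _ hf.aemeasurable]

theorem map_snd_withDensity_prod [SFinite μ] [SFinite ν] (hf : Measurable f) :
    ((μ.prod ν).withDensity f).map Prod.snd = ν.withDensity fun y => ∫⁻ x, f (x, y) ∂μ := by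
  ext s hs
  rw [Measure.map_apply measurable_snd hs, withDensity_apply _ (measurable_snd hs),
    withDensity_apply _ hs, ← univ_prod, ← Measure.prod_restrict, Measure.restrict_univ,
    lintegral_prod_symm _ hf.aemeasurable]

end Marginals

theorem prod_range_odd_div_even_eq_centralBinom_div (n : ℕ) :
    ∏ i ∈ range n, (2 * (i : ℝ) + 1) / (2 * i + 2) = Nat.centralBinom n / 4 ^ n := by
  induction n with
  | zero => simp
  | succ k ih =>
    have hrec : ((k : ℝ) + 1) * Nat.centralBinom (k + 1)
        = 2 * (2 * k + 1) * Nat.centralBinom k := by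
      exact_mod_cast Nat.succ_mul_centralBinom_succ k
    rw [prod_range_succ, ih]
    field_simp
    linear_combination (-2 * (4 : ℝ) ^ k) * hrec

theorem integral_cos_pow_two_mul_add_pi (n : ℕ) (a : ℝ) :
    ∫ x in a..a + π, cos x ^ (2 * n) = π * (Nat.centralBinom n / 4 ^ n) := by
  have hper : Function.Periodic (fun x => cos x ^ (2 * n)) π := fun x => by
    simp [cos_add_pi, pow_mul]
  have hshift :
      ∫ x in -(π / 2)..-(π / 2) + π, cos x ^ (2 * n) = ∫ x in 0..π, sin x ^ (2 * n) := by
    have h := integral_comp_add_right (a := -(π / 2)) (b := -(π / 2) + π)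
      (fun x => sin x ^ (2 * n)) (π / 2)
    simp only [sin_add_pi_div_two] at h
    rw [h]
    ring_nf
  rw [hper.intervalIntegral_add_eq a (-(π / 2)), hshift, integral_sin_pow_even,
    prod_range_odd_div_even_eq_centralBinom_div]

theorem cos_add_mul_sin_eq (t θ : ℝ) :
    cos θ + t * sin θ = √(1 + t ^ 2) * cos (θ - arctan t) := by
  rw [cos_sub, cos_arctan, sin_arctan]
  field_simp

theorem integral_cos_add_mul_sin_pow_two_mul (n : ℕ) (t : ℝ) :
    ∫ θ in -(π / 2)..π / 2, (cos θ + t * sin θ) ^ (2 * n)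
      = (1 + t ^ 2) ^ n * (π * (Nat.centralBinom n / 4 ^ n)) := by
  have hsqrt : √(1 + t ^ 2) ^ (2 * n) = (1 + t ^ 2) ^ n := by
    rw [pow_mul, sq_sqrt (by positivity)]
  simp only [cos_add_mul_sin_eq t, mul_pow, intervalIntegral.integral_const_mul, hsqrt,
    integral_comp_sub_right (fun x => cos x ^ (2 * n))]
  rw [show π / 2 - arctan t = -(π / 2) - arctan t + π by ring,
    integral_cos_pow_two_mul_add_pi]

theorem hasDerivWithinAt_tan_Ioo {x : ℝ} (hx : x ∈ Ioo (-(π / 2)) (π / 2)) :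
    HasDerivWithinAt tan (1 / cos x ^ 2) (Ioo (-(π / 2)) (π / 2)) x :=
  (hasDerivAt_tan (cos_pos_of_mem_Ioo hx).ne').hasDerivWithinAt

theorem abs_one_div_cos_sq_smul (g : ℝ → ℝ) :
    (fun θ => |1 / cos θ ^ 2| • g (tan θ)) = fun θ => g (tan θ) / cos θ ^ 2 := by
  ext θ
  rw [abs_of_nonneg (by positivity), smul_eq_mul, one_div_mul_eq_div]

theorem integrable_iff_integrableOn_tan_comp (g : ℝ → ℝ) :
    Integrable g ↔
      IntegrableOn (fun θ => g (tan θ) / cos θ ^ 2) (Ioo (-(π / 2)) (π / 2)) := by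
  rw [← integrableOn_univ, ← image_tan_Ioo, ← abs_one_div_cos_sq_smul,
    integrableOn_image_iff_integrableOn_abs_deriv_smul measurableSet_Ioo
      (fun x hx => hasDerivWithinAt_tan_Ioo hx) injOn_tan]

theorem integral_eq_setIntegral_tan_comp (g : ℝ → ℝ) :
    ∫ x, g x = ∫ θ in Ioo (-(π / 2)) (π / 2), g (tan θ) / cos θ ^ 2 := by
  rw [← setIntegral_univ, ← image_tan_Ioo,
    integral_image_eq_integral_abs_deriv_smul measurableSet_Ioo
      (fun x hx => hasDerivWithinAt_tan_Ioo hx) injOn_tan, abs_one_div_cos_sq_smul]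

theorem one_add_tan_mul_pow_div_div_cos_sq (n : ℕ) (t : ℝ) {θ : ℝ}
    (hθ : θ ∈ Ioo (-(π / 2)) (π / 2)) :
    (1 + tan θ * t) ^ (2 * n) / (1 + tan θ ^ 2) ^ (n + 1) / cos θ ^ 2
      = (cos θ + t * sin θ) ^ (2 * n) := by
  have hcos : cos θ ≠ 0 := (cos_pos_of_mem_Ioo hθ).ne'
  have h1 : 1 + tan θ * t = (cos θ + t * sin θ) / cos θ := by
    rw [tan_eq_sin_div_cos]; field_simp
  have h2 : 1 + tan θ ^ 2 = (cos θ ^ 2)⁻¹ := by rw [← inv_one_add_tan_sq hcos, inv_inv]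
  rw [h1, h2, div_pow, inv_pow, div_inv_eq_mul, ← pow_mul, mul_add, mul_one, pow_add,
    mul_comm 2 n]
  field_simp

theorem integrable_one_add_mul_pow_div_one_add_sq_pow (n : ℕ) (t : ℝ) :
    Integrable fun x : ℝ => (1 + x * t) ^ (2 * n) / (1 + x ^ 2) ^ (n + 1) := by
  rw [integrable_iff_integrableOn_tan_comp]
  refine (Continuous.integrableOn_Icc (by fun_prop)).mono_set Ioo_subset_Icc_self
    |>.congr_fun (fun θ hθ => (one_add_tan_mul_pow_div_div_cos_sq n t hθ).symm) measurableSet_Ioo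

theorem integral_one_add_mul_pow_div_one_add_sq_pow (n : ℕ) (t : ℝ) :
    ∫ x : ℝ, (1 + x * t) ^ (2 * n) / (1 + x ^ 2) ^ (n + 1)
      = (1 + t ^ 2) ^ n * (π * (Nat.centralBinom n / 4 ^ n)) := by
  rw [integral_eq_setIntegral_tan_comp,
    setIntegral_congr_fun measurableSet_Ioo
      fun θ hθ => one_add_tan_mul_pow_div_div_cos_sq n t hθ,
    ← integral_Ioc_eq_integral_Ioo, ← integral_of_le (by linarith [pi_pos]),
    integral_cos_add_mul_sin_pow_two_mul]

theorem cauchyCopulaComponent_comm (n : ℕ) (z₁ z₂ : ℝ) :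
    cauchyCopulaComponent n z₁ z₂ = cauchyCopulaComponent n z₂ z₁ := by
  simp only [cauchyCopulaComponent, mul_comm z₁ z₂, mul_comm ((1 + z₁ ^ 2) ^ (n + 1))]

theorem cauchyCopulaComponent_nonneg (n : ℕ) (z₁ z₂ : ℝ) :
    0 ≤ cauchyCopulaComponent n z₁ z₂ := by
  have := (even_two_mul n).pow_nonneg (1 + z₁ * z₂)
  unfold cauchyCopulaComponent
  positivity

theorem continuous_cauchyCopulaComponent (n : ℕ) :
    Continuous fun p : ℝ × ℝ => cauchyCopulaComponent n p.1 p.2 := by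
  unfold cauchyCopulaComponent
  exact Continuous.div (by fun_prop) (by fun_prop) fun p => by positivity

theorem cauchyCopulaComponent_eq_const_mul (n : ℕ) (z₁ z₂ : ℝ) :
    cauchyCopulaComponent n z₁ z₂
      = 4 ^ n / (Nat.centralBinom n * π ^ 2 * (1 + z₂ ^ 2) ^ (n + 1))
        * ((1 + z₁ * z₂) ^ (2 * n) / (1 + z₁ ^ 2) ^ (n + 1)) := by
  rw [cauchyCopulaComponent, Nat.centralBinom_eq_two_mul_choose, pow_mul]
  field_simp
  ring

theorem integrable_cauchyCopulaComponent_left (n : ℕ) (z₂ : ℝ) :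
    Integrable fun z₁ => cauchyCopulaComponent n z₁ z₂ := by
  simp only [cauchyCopulaComponent_eq_const_mul n _ z₂]
  exact (integrable_one_add_mul_pow_div_one_add_sq_pow n z₂).const_mul _

theorem integral_cauchyCopulaComponent_left (n : ℕ) (z₂ : ℝ) :
    ∫ z₁, cauchyCopulaComponent n z₁ z₂ = 1 / (π * (1 + z₂ ^ 2)) := by
  have hC : (0 : ℝ) < Nat.centralBinom n := mod_cast Nat.centralBinom_pos n
  simp only [cauchyCopulaComponent_eq_const_mul n _ z₂, MeasureTheory.integral_const_mul,
    integral_one_add_mul_pow_div_one_add_sq_pow]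
  field_simp
  ring

theorem lintegral_ofReal_cauchyCopulaComponent_left (n : ℕ) (z₂ : ℝ) :
    ∫⁻ z₁, ENNReal.ofReal (cauchyCopulaComponent n z₁ z₂)
      = ENNReal.ofReal (1 / (π * (1 + z₂ ^ 2))) := by
  rw [← ofReal_integral_eq_lintegral_ofReal (integrable_cauchyCopulaComponent_left n z₂)
    (ae_of_all _ fun z₁ => cauchyCopulaComponent_nonneg n z₁ z₂),
    integral_cauchyCopulaComponent_left]

theorem lintegral_ofReal_cauchyCopulaComponent_right (n : ℕ) (z₁ : ℝ) :
    ∫⁻ z₂, ENNReal.ofReal (cauchyCopulaComponent n z₁ z₂)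
      = ENNReal.ofReal (1 / (π * (1 + z₁ ^ 2))) := by
  simp_rw [cauchyCopulaComponent_comm n z₁]
  exact lintegral_ofReal_cauchyCopulaComponent_left n z₁


theorem stdCauchyMeasure_eq_cauchyMeasure : stdCauchyMeasure = cauchyMeasure 0 1 := by
  rw [cauchyMeasure_of_scale_ne_zero _ one_ne_zero, stdCauchyMeasure]
  congr with z
  simp [cauchyPDF, cauchyPDFReal, add_comm, mul_comm]

instance isProbabilityMeasure_stdCauchyMeasure : IsProbabilityMeasure stdCauchyMeasure := by
  rw [stdCauchyMeasure_eq_cauchyMeasure]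
  infer_instance

theorem cauchyCopulaComponent_isDensity_and_marginals (n : ℕ) :
    IsProbabilityMeasure
      ((volume : Measure (ℝ × ℝ)).withDensity
        (fun p => ENNReal.ofReal (cauchyCopulaComponent n p.1 p.2))) ∧
    Measure.map Prod.fst
      ((volume : Measure (ℝ × ℝ)).withDensity
        (fun p => ENNReal.ofReal (cauchyCopulaComponent n p.1 p.2))) = stdCauchyMeasure ∧
    Measure.map Prod.snd
      ((volume : Measure (ℝ × ℝ)).withDensity
        (fun p => ENNReal.ofReal (cauchyCopulaComponent n p.1 p.2))) = stdCauchyMeasure := by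
  have hf := (continuous_cauchyCopulaComponent n).measurable.ennreal_ofReal
  have hfst : Measure.map Prod.fst ((volume : Measure (ℝ × ℝ)).withDensity
      (fun p => ENNReal.ofReal (cauchyCopulaComponent n p.1 p.2))) = stdCauchyMeasure := by
    rw [Measure.volume_eq_prod, map_fst_withDensity_prod hf, stdCauchyMeasure]
    simp only [lintegral_ofReal_cauchyCopulaComponent_right]
  refine ⟨?_, hfst, ?_⟩
  · rw [← Measure.isProbabilityMeasure_map_iff measurable_fst.aemeasurable, hfst]
    infer_instance
  · rw [Measure.volume_eq_prod, map_snd_withDensity_prod hf, stdCauchyMeasure]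
    simp only [lintegral_ofReal_cauchyCopulaComponent_left]
end
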